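/- Let ω ∈ ℝ^n satisfy ω·s ≠ 0 for all nonzero s ∈ ℤ^n, and let f : T^n → ℝ be continuous. Then (1/T) ∫₀^T f(x₀ + ωt) dt converges as T → ∞ to ∫_{T^n} f dμ, uniformly in x₀ ∈ T^n. -/

import Mathlib

open MeasureTheory Filter

instance : IsProbabilityMeasure (volume : Measure (AddCircle (1:ℝ))) :=
  ⟨by rw [AddCircle.measure_univ]; norm_num⟩

/-!
The continuous functions whose time averages converge to their space average uniformly in the
starting point form a closed subspace of `C(𝕋ⁿ, ℂ)`: both the time averages and the integral are
`1`-Lipschitz for the sup norm. Along an orbit the character `e_s` is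
`t ↦ e_s(x₀) exp(2πi (s·ω) t)`, so for `s ≠ 0` its average over `[0, T]` is `O(1/T)` uniformly in
`x₀` because `s·ω ≠ 0`, while `e_0 = 1` is its own average. The characters span a dense subspace
by Stone–Weierstrass, hence the closed subspace is everything.
-/

open Topology Complex

lemma Metric.tendstoUniformly_of_dist_le {ι α β : Type*} [PseudoMetricSpace β]
    {F : ι → α → β} {f : α → β} {p : Filter ι} {b : ι → ℝ} (hb : Tendsto b p (𝓝 0))
    (h : ∀ᶠ i in p, ∀ x, dist (f x) (F i x) ≤ b i) : TendstoUniformly F f p := by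
  refine Metric.tendstoUniformly_iff.2 fun ε hε => ?_
  filter_upwards [h, hb.eventually (gt_mem_nhds hε)] with i hi hbi x
  exact (hi x).trans_lt hbi

section TimeAverage

variable {X E : Type*} [TopologicalSpace X] [NormedAddCommGroup E] [NormedSpace ℝ E]

noncomputable def timeAverage (γ : X → C(ℝ, X)) (g : X → E) (T : ℝ) (x : X) : E :=
  T⁻¹ • ∫ t in (0:ℝ)..T, g (γ x t)

variable {γ : X → C(ℝ, X)}

lemma timeAverage_const [CompleteSpace E] (c : E) {T : ℝ} (hT : T ≠ 0) (x : X) :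
    timeAverage γ (fun _ => c) T x = c := by
  rw [timeAverage, intervalIntegral.integral_const, smul_smul, sub_zero, inv_mul_cancel₀ hT,
    one_smul]

lemma timeAverage_add {g h : X → E} (hg : Continuous g) (hh : Continuous h) (T : ℝ) (x : X) :
    timeAverage γ (g + h) T x = timeAverage γ g T x + timeAverage γ h T x := by
  simp only [timeAverage, Pi.add_apply, ← smul_add]
  exact congrArg _ (intervalIntegral.integral_add ((hg.comp (γ x).continuous).intervalIntegrable _ _)
    ((hh.comp (γ x).continuous).intervalIntegrable _ _))

lemma timeAverage_sub {g h : X → E} (hg : Continuous g) (hh : Continuous h) (T : ℝ) (x : X) :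
    timeAverage γ (g - h) T x = timeAverage γ g T x - timeAverage γ h T x := by
  simp only [timeAverage, Pi.sub_apply, ← smul_sub]
  exact congrArg _ (intervalIntegral.integral_sub ((hg.comp (γ x).continuous).intervalIntegrable _ _)
    ((hh.comp (γ x).continuous).intervalIntegrable _ _))

lemma timeAverage_smul {𝕜 : Type*} [NontriviallyNormedField 𝕜] [NormedSpace 𝕜 E]
    [SMulCommClass ℝ 𝕜 E] (c : 𝕜) (g : X → E) (T : ℝ) (x : X) :
    timeAverage γ (c • g) T x = c • timeAverage γ g T x := by
  simp only [timeAverage, Pi.smul_apply, intervalIntegral.integral_smul]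
  exact smul_comm _ _ _

lemma norm_timeAverage_le {g : X → E} {C : ℝ} (hC : ∀ y, ‖g y‖ ≤ C) (T : ℝ) (x : X) :
    ‖timeAverage γ g T x‖ ≤ C := by
  rcases eq_or_ne T 0 with rfl | hT
  · simpa [timeAverage] using (norm_nonneg _).trans (hC x)
  calc ‖timeAverage γ g T x‖ ≤ |T|⁻¹ * (C * |T - 0|) := by
        rw [timeAverage, norm_smul, norm_inv, Real.norm_eq_abs]
        gcongr
        exact intervalIntegral.norm_integral_le_of_norm_le_const fun t _ => hC _
    _ = C := by rw [sub_zero, mul_comm C, inv_mul_cancel_left₀ (abs_ne_zero.2 hT)]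

end TimeAverage

section UniformAverage

variable {X 𝕜 E : Type*} [TopologicalSpace X] [CompactSpace X] [MeasurableSpace X]
  [OpensMeasurableSpace X] [NontriviallyNormedField 𝕜] [NormedAddCommGroup E] [NormedSpace ℝ E]
  [NormedSpace 𝕜 E] [SMulCommClass ℝ 𝕜 E] (μ : Measure X) [IsProbabilityMeasure μ]
  (γ : X → C(ℝ, X))

omit [NormedSpace ℝ E] in
lemma ContinuousMap.integrable (g : C(X, E)) : Integrable g μ :=
  g.continuous.integrable_of_hasCompactSupport (HasCompactSupport.of_compactSpace _)

omit [OpensMeasurableSpace X] in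
lemma ContinuousMap.norm_integral_le (g : C(X, E)) : ‖∫ x, g x ∂μ‖ ≤ ‖g‖ := by
  simpa using norm_integral_le_of_norm_le_const (μ := μ) (ae_of_all _ g.norm_coe_le_norm)

variable (𝕜 E) in
def uniformAverageSubmodule : Submodule 𝕜 C(X, E) where
  carrier := {g | TendstoUniformly (timeAverage γ g) (fun _ => ∫ x, g x ∂μ) atTop}
  zero_mem' := by
    have h0 : timeAverage γ (0 : X → E) = fun _ _ => 0 := by
      funext T x
      simp [timeAverage]
    show TendstoUniformly _ _ _
    simpa [h0] using tendsto_const_nhds.tendstoUniformly_const (p := (atTop : Filter ℝ)) (α := X)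
      (b := (0 : E))
  add_mem' := by
    intro g h hg hh
    show TendstoUniformly _ _ _
    convert hg.add hh using 1
    · funext T x
      exact timeAverage_add g.continuous h.continuous T x
    · funext
      exact integral_add (g.integrable μ) (h.integrable μ)
  smul_mem' := by
    intro c g hg
    show TendstoUniformly _ _ _
    convert (uniformContinuous_const_smul c).comp_tendstoUniformly hg using 1
    · funext T x
      exact timeAverage_smul c g T x
    · funext
      exact integral_smul c g

variable {μ γ}

lemma isClosed_uniformAverageSubmodule :
    IsClosed (uniformAverageSubmodule 𝕜 E μ γ : Set C(X, E)) := by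
  refine isClosed_of_closure_subset fun g hg => ?_
  refine Metric.tendstoUniformly_iff.2 fun ε hε => ?_
  obtain ⟨h, hh, hgh⟩ := Metric.mem_closure_iff.1 hg (ε / 3) (by positivity)
  filter_upwards [Metric.tendstoUniformly_iff.1 hh (ε / 3) (by positivity)] with T hT x
  have hint : dist (∫ y, g y ∂μ) (∫ y, h y ∂μ) < ε / 3 := by
    rw [dist_eq_norm, ← integral_sub (g.integrable μ) (h.integrable μ)]
    exact ((g - h).norm_integral_le μ).trans_lt (dist_eq_norm g h ▸ hgh)
  have havg : dist (timeAverage γ h T x) (timeAverage γ g T x) < ε / 3 := by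
    rw [dist_eq_norm, ← timeAverage_sub h.continuous g.continuous]
    exact (norm_timeAverage_le (fun y => (h - g).norm_coe_le_norm y) T x).trans_lt
      (dist_eq_norm h g ▸ dist_comm g h ▸ hgh)
  calc dist (∫ y, g y ∂μ) (timeAverage γ g T x)
      ≤ dist (∫ y, g y ∂μ) (∫ y, h y ∂μ) + dist (∫ y, h y ∂μ) (timeAverage γ h T x)
        + dist (timeAverage γ h T x) (timeAverage γ g T x) := dist_triangle4 _ _ _ _
    _ < ε / 3 + ε / 3 + ε / 3 := by gcongr; exact hT x
    _ = ε := by ring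

end UniformAverage

lemma Complex.norm_integral_exp_mul_I_le {c : ℝ} (hc : c ≠ 0) (T : ℝ) :
    ‖∫ t in (0:ℝ)..T, exp (c * I * t)‖ ≤ 2 / |c| := by
  have hcI : (c * I : ℂ) ≠ 0 := mul_ne_zero (ofReal_ne_zero.2 hc) I_ne_zero
  rw [integral_exp_mul_complex hcI, norm_div, norm_mul, norm_I, mul_one, norm_real,
    Real.norm_eq_abs]
  gcongr
  calc ‖exp (c * I * T) - exp (c * I * (0:ℝ))‖
      ≤ ‖exp (c * I * T)‖ + ‖exp (c * I * (0:ℝ))‖ := norm_sub_le _ _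
    _ = 2 := by norm_num [Complex.norm_exp]

lemma fourier_add_apply {T : ℝ} (k : ℤ) (x y : AddCircle T) :
    fourier k (x + y) = fourier k x * fourier k y := by
  simp only [fourier_apply, smul_add, AddCircle.toCircle_add, Circle.coe_mul]

lemma integral_fourier_of_ne_zero {k : ℤ} (hk : k ≠ 0) :
    ∫ x : UnitAddCircle, fourier k x = 0 :=
  integral_eq_zero_of_add_right_eq_neg (fun x => by
    exact_mod_cast fourier_add_half_inv_index hk one_pos x)

namespace UnitAddTorus

open Submodule Set Real

variable {d : Type*} [Fintype d]

def linearFlow (ω : d → ℝ) (x : UnitAddTorus d) : C(ℝ, UnitAddTorus d) :=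
  ⟨fun t i => x i + ((ω i * t : ℝ) : UnitAddCircle), by fun_prop⟩

lemma mFourier_linearFlow (s : d → ℤ) (ω : d → ℝ) (x : UnitAddTorus d) (t : ℝ) :
    mFourier s (linearFlow ω x t) =
      mFourier s x * exp ((2 * π * ∑ i, s i * ω i : ℝ) * I * t) := by
  simp only [mFourier, linearFlow, ContinuousMap.coe_mk, fourier_add_apply,
    Finset.prod_mul_distrib, fourier_coe_apply, ← Complex.exp_sum]
  congr 2
  push_cast
  simp only [Finset.mul_sum, Finset.sum_mul]
  exact Finset.sum_congr rfl fun i _ => by ring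

lemma integral_mFourier_of_ne_zero {s : d → ℤ} (hs : s ≠ 0) :
    ∫ x : UnitAddTorus d, mFourier s x = 0 := by
  obtain ⟨i, hi⟩ := Function.ne_iff.1 hs
  simp only [mFourier, ContinuousMap.coe_mk]
  rw [integral_fintype_prod_volume_eq_prod]
  exact Finset.prod_eq_zero (Finset.mem_univ i) (integral_fourier_of_ne_zero hi)

lemma norm_timeAverage_mFourier_linearFlow_le {ω : d → ℝ} {s : d → ℤ}
    (hs : ∑ i, (s i : ℝ) * ω i ≠ 0) {T : ℝ} (hT : 0 < T) (x : UnitAddTorus d) :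
    ‖timeAverage (linearFlow ω) (mFourier s) T x‖ ≤ 2 / |2 * π * ∑ i, s i * ω i| * T⁻¹ := by
  have hc : 2 * π * ∑ i, (s i : ℝ) * ω i ≠ 0 := mul_ne_zero (by positivity) hs
  simp only [timeAverage, mFourier_linearFlow, intervalIntegral.integral_const_mul]
  rw [norm_smul, norm_mul, norm_inv, norm_of_nonneg hT.le, mul_comm]
  gcongr
  calc ‖mFourier s x‖ * ‖∫ t in (0:ℝ)..T, exp ((2 * π * ∑ i, s i * ω i : ℝ) * I * t)‖
      ≤ 1 * (2 / |2 * π * ∑ i, s i * ω i|) := by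
        gcongr
        · exact ((mFourier s).norm_coe_le_norm x).trans_eq mFourier_norm
        · exact norm_integral_exp_mul_I_le hc T
    _ = 2 / |2 * π * ∑ i, s i * ω i| := one_mul _

lemma mFourier_mem_uniformAverageSubmodule {ω : d → ℝ}
    (hω : ∀ s : d → ℤ, s ≠ 0 → ∑ i, (s i : ℝ) * ω i ≠ 0) (s : d → ℤ) :
    mFourier s ∈ uniformAverageSubmodule ℂ ℂ volume (linearFlow ω) := by
  show TendstoUniformly _ _ _
  rcases eq_or_ne s 0 with rfl | hs
  · simp only [mFourier_zero, ContinuousMap.coe_one, Pi.one_apply, integral_const, probReal_univ,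
      one_smul]
    refine (tendstoUniformly_congr ?_).2 (tendsto_const_nhds.tendstoUniformly_const)
    filter_upwards [eventually_ne_atTop 0] with T hT
    funext x
    exact timeAverage_const (γ := linearFlow ω) (1 : ℂ) hT x
  · rw [integral_mFourier_of_ne_zero hs]
    refine Metric.tendstoUniformly_of_dist_le
      (tendsto_inv_atTop_zero.const_mul (2 / |2 * π * ∑ i, s i * ω i|) |>.trans (by simp)) ?_
    filter_upwards [eventually_gt_atTop 0] with T hT x
    rw [dist_zero_left]
    exact norm_timeAverage_mFourier_linearFlow_le (hω s hs) hT x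

end UnitAddTorus

open UnitAddTorus Submodule Set in
/-- Weyl's equidistribution theorem for the linear (Kronecker) flow on the torus: for a
non-resonant frequency vector `ω` and continuous `f`, the time averages
`(1/T)∫₀^T f(x₀ + ωt) dt` converge, uniformly in `x₀`, to the space average of `f`. -/
theorem weyl_equidistribution_uniform (n : ℕ) (ω : Fin n → ℝ)
    (hω : ∀ s : Fin n → ℤ, s ≠ 0 → (∑ i, (s i : ℝ) * ω i) ≠ 0)
    (f : (Fin n → AddCircle (1:ℝ)) → ℝ) (hf : Continuous f) :
    TendstoUniformly
      (fun (T : ℝ) (x₀ : Fin n → AddCircle (1:ℝ)) =>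
        (1 / T) * ∫ t in (0:ℝ)..T, f (fun i => x₀ i + ((ω i * t : ℝ) : AddCircle (1:ℝ))))
      (fun _ => ∫ x, f x) atTop := by
  let F : C(UnitAddTorus (Fin n), ℂ) := ⟨fun x => (f x : ℂ), by fun_prop⟩
  have hF : F ∈ uniformAverageSubmodule ℂ ℂ volume (linearFlow ω) :=
    (span ℂ (range (mFourier (d := Fin n)))).topologicalClosure_minimal
      (span_le.2 (range_subset_iff.2 (mFourier_mem_uniformAverageSubmodule hω)))
      isClosed_uniformAverageSubmodule (span_mFourier_closure_eq_top (d := Fin n) ▸ mem_top)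
  convert uniformContinuous_re.comp_tendstoUniformly hF using 1
  · funext T x
    simp [timeAverage, F, linearFlow, intervalIntegral.integral_ofReal]
  · funext
    show _ = (∫ x, ((f x : ℝ) : ℂ)).re
    rw [integral_complex_ofReal, ofReal_re]
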